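/- Fix a real Δ > 3, an integer 0 ≤ i ≤ k−1, and vertices x, y ∈ V with d_G(x, y) ≥ (3Δ)^i · W(x, y). Then at least one of the following holds: (1) d_H(x, y) ≤ (1 + 4i/(Δ−3)) · d_G(x, y); or (2) A_{i+1} ≠ ∅ and d_H(x, p_{i+1}(x)) ≤ (Δ/(Δ−3)) · d_G(x, y). -/

import Mathlib

/-!
Induction on `i`. If some vertex of `A (i + 1)` lies within `Δ/(Δ-3) · d(x, y)` of `x`, then
`p_{i+1}(x)` is joined to `x` by an edge of `H`, or is at `G`-distance `0` from `x` (and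
zero-distance pairs are joined in `H` by zero-weight paths). Otherwise, for `i = 0` the vertex
`y` lies in the bunch of `x`. For `i + 1`, cut a shortest `x`-`y` path into pieces of length
between `T` and `3T`, where `T = (3Δ)^i W`, so that the induction hypothesis applies to every
piece in both directions. A piece violating the stretch bound has both endpoints `H`-close to
their level-`(i+1)` pivots. Between the first and the last such piece, take the detour through
these two pivots: since `A (i + 2)` is far from `x`, one of them has level `i + 1` and the other
lies in its bunch. The detour costs an additive `12 · Δ/(Δ-3) · T ≤ 4 d(x, y)/(Δ-3)`, which is
exactly the increase of the stretch from `i` to `i + 1`.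
-/

open scoped ENNReal Classical

namespace ASP

variable {V : Type*}

noncomputable def wWeight {G : SimpleGraph V} (w : V → V → ℝ≥0∞) {x y : V}
    (p : G.Walk x y) : ℝ≥0∞ :=
  (p.darts.map fun d => w d.toProd.1 d.toProd.2).sum

noncomputable def gdist (G : SimpleGraph V) (w : V → V → ℝ≥0∞) (x y : V) : ℝ≥0∞ :=
  ⨅ p : G.Walk x y, wWeight w p

noncomputable def maxW {G : SimpleGraph V} (w : V → V → ℝ≥0∞) {x y : V}
    (p : G.Walk x y) : ℝ≥0∞ :=
  (p.darts.map fun d => w d.toProd.1 d.toProd.2).foldr max 0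

/-- The bunch of a vertex `u` of level `i`: all vertices of `A i` strictly closer to `u` than
`A (i+1)` (vacuously all of `A i` if `A (i+1) = ∅`), together with the pivots of all
nonempty higher levels. -/
def bunch (G : SimpleGraph V) (w : V → V → ℝ≥0∞) (A : ℕ → Set V) (pv : ℕ → V → V)
    (k i : ℕ) (u : V) : Set V :=
  {v | v ∈ A i ∧ ∀ a ∈ A (i + 1), gdist G w u v < gdist G w u a} ∪
    {v | ∃ j, i < j ∧ j < k ∧ (A j).Nonempty ∧ v = pv j u}

/-- The emulator graph `H`: an edge `{u, v}` for every `u ∈ A i \ A (i+1)` and `v ∈ B(u)`. -/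
def emulGraph (G : SimpleGraph V) (w : V → V → ℝ≥0∞) (A : ℕ → Set V) (pv : ℕ → V → V)
    (k : ℕ) : SimpleGraph V where
  Adj u v := u ≠ v ∧ ∃ i, (u ∈ A i ∧ u ∉ A (i + 1) ∧ v ∈ bunch G w A pv k i u) ∨
      (v ∈ A i ∧ v ∉ A (i + 1) ∧ u ∈ bunch G w A pv k i v)
  symm := ⟨fun u v h => ⟨h.1.symm, h.2.imp fun _ hi => hi.symm⟩⟩
  loopless := ⟨fun u h => h.1 rfl⟩

open SimpleGraph

section Walks

variable {G : SimpleGraph V} {w : V → V → ℝ≥0∞} {x y z : V}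

@[simp]
lemma wWeight_nil : wWeight w (Walk.nil : G.Walk x x) = 0 := rfl

@[simp]
lemma wWeight_cons (h : G.Adj x y) (p : G.Walk y z) :
    wWeight w (p.cons h) = w x y + wWeight w p := by
  simp [wWeight]

lemma wWeight_append (p : G.Walk x y) (q : G.Walk y z) :
    wWeight w (p.append q) = wWeight w p + wWeight w q := by
  simp [wWeight, Walk.darts_append]

lemma wWeight_take_add_wWeight_drop (p : G.Walk x y) (n : ℕ) :
    wWeight w (p.take n) + wWeight w (p.drop n) = wWeight w p := by
  simp only [wWeight, Walk.darts_take, Walk.darts_drop, ← List.sum_append, ← List.map_append,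
    List.take_append_drop]

lemma wWeight_reverse (hsym : ∀ u v, G.Adj u v → w u v = w v u) (p : G.Walk x y) :
    wWeight w p.reverse = wWeight w p := by
  simp only [wWeight, Walk.darts_reverse, List.map_reverse, List.sum_reverse, List.map_map]
  congr 1
  exact List.map_congr_left fun d _ => hsym _ _ d.adj.symm

lemma wWeight_take_le (p : G.Walk x y) (n : ℕ) : wWeight w (p.take n) ≤ wWeight w p :=
  le_self_add.trans_eq (wWeight_take_add_wWeight_drop p n)

lemma wWeight_drop_le (p : G.Walk x y) (n : ℕ) : wWeight w (p.drop n) ≤ wWeight w p :=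
  le_add_self.trans_eq (wWeight_take_add_wWeight_drop p n)

lemma le_maxW {p : G.Walk x y} {d : G.Dart} (hd : d ∈ p.darts) : w d.fst d.snd ≤ maxW w p :=
  List.le_max_of_le (List.mem_map_of_mem hd) le_rfl

lemma maxW_le {p : G.Walk x y} {b : ℝ≥0∞} (h : ∀ d ∈ p.darts, w d.fst d.snd ≤ b) :
    maxW w p ≤ b :=
  List.max_le_of_forall_le _ _ (by simpa using h)

lemma maxW_le_of_darts_sublist {p : G.Walk x y} {x' y' : V} {q : G.Walk x' y'}
    (h : p.darts.Sublist q.darts) : maxW w p ≤ maxW w q :=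
  maxW_le fun _ hd => le_maxW (h.subset hd)

lemma maxW_reverse_le (hsym : ∀ u v, G.Adj u v → w u v = w v u) (p : G.Walk x y) :
    maxW w p.reverse ≤ maxW w p :=
  maxW_le fun d hd => by
    rw [Walk.mem_darts_reverse] at hd
    simpa [hsym _ _ d.adj] using le_maxW (w := w) hd

lemma wWeight_le_length_mul_maxW (p : G.Walk x y) : wWeight w p ≤ p.length * maxW w p := by
  simpa [wWeight, nsmul_eq_mul] using
    List.sum_le_card_nsmul (p.darts.map fun d => w d.fst d.snd) (maxW w p)
      (by simpa using fun d hd => le_maxW (w := w) hd)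

lemma gdist_le_wWeight (p : G.Walk x y) : gdist G w x y ≤ wWeight w p := iInf_le _ p

@[simp]
lemma gdist_self (x : V) : gdist G w x x = 0 :=
  nonpos_iff_eq_zero.1 (gdist_le_wWeight Walk.nil)

lemma gdist_le_of_adj (h : G.Adj x y) : gdist G w x y ≤ w x y := by
  simpa using gdist_le_wWeight (w := w) (Walk.cons h Walk.nil)

lemma gdist_triangle (x y z : V) : gdist G w x z ≤ gdist G w x y + gdist G w y z := by
  simp only [gdist, ENNReal.iInf_add, ENNReal.add_iInf]
  exact le_iInf₂ fun q p => (gdist_le_wWeight (p.append q)).trans_eq (wWeight_append p q)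

lemma gdist_comm (hsym : ∀ u v, G.Adj u v → w u v = w v u) (x y : V) :
    gdist G w x y = gdist G w y x := by
  have key : ∀ a b : V, gdist G w a b ≤ gdist G w b a := fun a b =>
    le_iInf fun p => (gdist_le_wWeight p.reverse).trans_eq (wWeight_reverse hsym p)
  exact le_antisymm (key x y) (key y x)

def IsShortest (w : V → V → ℝ≥0∞) (p : G.Walk x y) : Prop :=
  wWeight w p = gdist G w x y

namespace IsShortest

variable {p : G.Walk x y}

lemma copy (hp : IsShortest w p) {x' y' : V} (hx : x = x') (hy : y = y') :
    IsShortest w (p.copy hx hy) := by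
  subst hx hy
  simpa using hp

lemma reverse (hp : IsShortest w p) (hsym : ∀ u v, G.Adj u v → w u v = w v u) :
    IsShortest w p.reverse := by
  rw [IsShortest, wWeight_reverse hsym, hp, gdist_comm hsym]

lemma take_and_drop (hp : IsShortest w p) (hfin : wWeight w p ≠ ⊤) (n : ℕ) :
    IsShortest w (p.take n) ∧ IsShortest w (p.drop n) := by
  have ha := gdist_le_wWeight (w := w) (p.take n)
  have hb := gdist_le_wWeight (w := w) (p.drop n)
  have hsplit := wWeight_take_add_wWeight_drop (w := w) p n
  have hle : wWeight w (p.take n) + wWeight w (p.drop n) ≤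
      gdist G w x (p.getVert n) + gdist G w (p.getVert n) y := by
    rw [hsplit, hp]
    exact gdist_triangle _ _ _
  rw [← hsplit] at hfin
  obtain ⟨hfa, hfb⟩ := ENNReal.add_ne_top.1 hfin
  constructor
  · refine le_antisymm ?_ ha
    exact (ENNReal.add_le_add_iff_right hfb).1 (hle.trans (by gcongr))
  · refine le_antisymm ?_ hb
    exact (ENNReal.add_le_add_iff_left hfa).1 (hle.trans (by gcongr))

lemma gdist_add (hp : IsShortest w p) (hfin : wWeight w p ≠ ⊤) (n : ℕ) :
    gdist G w x (p.getVert n) + gdist G w (p.getVert n) y = gdist G w x y := by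
  obtain ⟨htake, hdrop⟩ := hp.take_and_drop hfin n
  rw [← htake, ← hdrop, wWeight_take_add_wWeight_drop, hp]

lemma exists_sub (hp : IsShortest w p) (hfin : wWeight w p ≠ ⊤) {s t : ℕ} (hst : s ≤ t) :
    ∃ r : G.Walk (p.getVert s) (p.getVert t),
      IsShortest w r ∧ r.darts.Sublist p.darts ∧ r.length ≤ t - s := by
  have hdrop := (hp.take_and_drop hfin s).2
  have hend : (p.drop s).getVert (t - s) = p.getVert t := by
    rw [Walk.drop_getVert, Nat.add_sub_cancel' hst]
  refine ⟨((p.drop s).take (t - s)).copy rfl hend,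
    (hdrop.take_and_drop (ne_top_of_le_ne_top hfin (wWeight_drop_le p s)) (t - s)).1.copy
      rfl hend, ?_, by simp⟩
  rw [Walk.darts_copy, Walk.darts_take, Walk.darts_drop]
  exact (List.take_sublist _ _).trans (List.drop_sublist _ _)

lemma gdist_getVert_add (hp : IsShortest w p) (hfin : wWeight w p ≠ ⊤) {s t r : ℕ}
    (hst : s ≤ t) (htr : t ≤ r) :
    gdist G w (p.getVert s) (p.getVert t) + gdist G w (p.getVert t) (p.getVert r) =
      gdist G w (p.getVert s) (p.getVert r) := by
  have hdrop := (hp.take_and_drop hfin s).2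
  have hfin' := ne_top_of_le_ne_top hfin (wWeight_drop_le p s)
  have h := (hdrop.take_and_drop hfin' (r - s)).1.gdist_add
    (ne_top_of_le_ne_top hfin' (wWeight_take_le _ _)) (t - s)
  simpa [Walk.take_getVert, Walk.drop_getVert, Nat.add_sub_cancel' hst,
    Nat.add_sub_cancel' (hst.trans htr), min_eq_right (Nat.sub_le_sub_right htr s)] using h

lemma gdist_getVert_succ_le (hp : IsShortest w p) (hfin : wWeight w p ≠ ⊤) (t : ℕ) :
    gdist G w (p.getVert t) (p.getVert (t + 1)) ≤ maxW w p := by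
  obtain ⟨r, hr, hsub, hlen⟩ := hp.exists_sub hfin t.le_succ
  rw [← hr]
  calc wWeight w r ≤ r.length * maxW w r := wWeight_le_length_mul_maxW r
    _ ≤ 1 * maxW w p := by
      gcongr
      · exact_mod_cast hlen.trans (by omega)
      · exact maxW_le_of_darts_sublist hsub
    _ = maxW w p := one_mul _

end IsShortest

end Walks

lemma exists_first_last_of_not_forall {P : ℕ → Prop} {m : ℕ} (h : ¬∀ l < m, P l) :
    ∃ s e, s ≤ e ∧ e < m ∧ ¬P s ∧ ¬P e ∧ (∀ l < s, P l) ∧ ∀ l, e < l → l < m → P l := by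
  have hex : ∃ l, l < m ∧ ¬P l := by simpa using h
  have hs := Nat.find_spec hex
  have he := Nat.findGreatest_spec (P := fun l => l < m ∧ ¬P l) hs.1.le hs
  refine ⟨Nat.find hex, Nat.findGreatest (fun l => l < m ∧ ¬P l) m,
    Nat.le_findGreatest hs.1.le hs, he.1, hs.2, he.2, fun l hl => ?_, fun l hl hlm => ?_⟩
  · by_contra hP
    exact Nat.find_min hex hl ⟨hl.trans hs.1, hP⟩
  · by_contra hP
    exact Nat.findGreatest_is_greatest hl hlm.le ⟨hlm, hP⟩

lemma exists_piece {g : ℕ → ℕ → ℝ≥0∞} {T : ℝ≥0∞}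
    (hadd : ∀ s t r, s ≤ t → t ≤ r → g s t + g t r = g s r) (hstep : ∀ t, g t (t + 1) ≤ T)
    {s n : ℕ} (hsn : s < n) (hTn : T ≤ g s n) :
    ∃ r, s < r ∧ r ≤ n ∧ T ≤ g s r ∧ g s r ≤ 2 * T := by
  have hex : ∃ r, s < r ∧ T ≤ g s r := ⟨n, hsn, hTn⟩
  obtain ⟨hsr, hTr⟩ := Nat.find_spec hex
  refine ⟨Nat.find hex, hsr, Nat.find_min' hex ⟨hsn, hTn⟩, hTr, ?_⟩
  obtain ⟨r, hr⟩ : ∃ r, Nat.find hex = r + 1 := ⟨Nat.find hex - 1, by omega⟩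
  rw [hr, two_mul]
  rcases (Nat.le_of_lt_succ (hr ▸ hsr)).eq_or_lt with rfl | hsr'
  · exact (hstep s).trans le_self_add
  have hprev : g s r < T := by
    by_contra! h
    exact Nat.find_min hex (by omega) ⟨hsr', h⟩
  rw [← hadd s r (r + 1) hsr'.le r.le_succ]
  exact add_le_add hprev.le (hstep r)

lemma exists_segmentation {g : ℕ → ℕ → ℝ≥0∞} {T : ℝ≥0∞} (hT : T ≠ ⊤)
    (hadd : ∀ s t r, s ≤ t → t ≤ r → g s t + g t r = g s r) (hstep : ∀ t, g t (t + 1) ≤ T)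
    {s n : ℕ} (hsn : s ≤ n) (hTn : T ≤ g s n) :
    ∃ m, ∃ f : ℕ → ℕ, Monotone f ∧ f 0 = s ∧ f m = n ∧
      ∀ l < m, T ≤ g (f l) (f (l + 1)) ∧ g (f l) (f (l + 1)) ≤ 3 * T := by
  induction hd : n - s using Nat.strong_induction_on generalizing s with
  | _ d ih =>
  rcases hsn.eq_or_lt with rfl | hlt
  · exact ⟨0, fun _ => s, monotone_const, rfl, rfl, fun l hl => absurd hl (Nat.not_lt_zero l)⟩
  by_cases hsmall : g s n ≤ 3 * T
  · refine ⟨1, fun l => if l = 0 then s else n, fun a b hab => ?_, by simp, by simp, ?_⟩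
    · dsimp only
      split_ifs <;> omega
    · intro l hl
      obtain rfl : l = 0 := by omega
      simpa using ⟨hTn, hsmall⟩
  push Not at hsmall
  obtain ⟨r, hsr, hrn, hTr, hr2⟩ := exists_piece hadd hstep hlt hTn
  have hrest : T ≤ g r n := by
    by_contra! h
    refine hsmall.not_gt ?_
    calc g s n = g s r + g r n := (hadd s r n hsr.le hrn).symm
      _ < 2 * T + T := ENNReal.add_lt_add_of_le_of_lt
          (ne_top_of_le_ne_top (ENNReal.mul_ne_top (by simp) hT) hr2) hr2 h
      _ = 3 * T := by ring
  obtain ⟨m, f, hf, hf0, hfm, hpieces⟩ := ih (n - r) (by omega) hrn hrest rfl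
  refine ⟨m + 1, fun l => if l = 0 then s else f (l - 1), fun a b hab => ?_, by simp,
    by simp [hfm], fun l hl => ?_⟩
  · dsimp only
    split_ifs with ha hb hb
    · exact le_rfl
    · exact hsr.le.trans (hf0 ▸ hf (Nat.zero_le _))
    · omega
    · exact hf (by omega)
  · rcases l with _ | l
    · simpa [hf0] using ⟨hTr, hr2.trans (by gcongr; norm_num)⟩
    · simpa using hpieces l (by omega)

lemma IsShortest.exists_pieces {G : SimpleGraph V} {w : V → V → ℝ≥0∞} {x y : V}
    {q : G.Walk x y} (hq : IsShortest w q) (hfin : wWeight w q ≠ ⊤) {T : ℝ≥0∞} (hT : T ≠ ⊤)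
    (hWT : maxW w q ≤ T) (hTD : T ≤ gdist G w x y) :
    ∃ m, ∃ f : ℕ → ℕ, Monotone f ∧ q.getVert (f 0) = x ∧ q.getVert (f m) = y ∧
      ∀ l < m, T ≤ gdist G w (q.getVert (f l)) (q.getVert (f (l + 1))) ∧
        gdist G w (q.getVert (f l)) (q.getVert (f (l + 1))) ≤ 3 * T := by
  obtain ⟨m, f, hf, hf0, hfm, hpieces⟩ := exists_segmentation hT
    (fun _ _ _ => hq.gdist_getVert_add hfin) (fun t => (hq.gdist_getVert_succ_le hfin t).trans hWT)
    (Nat.zero_le q.length) (by simpa using hTD)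
  exact ⟨m, f, hf, by simp [hf0], by simp [hfm], hpieces⟩

lemma gdist_le_mul_of_chain {H : SimpleGraph V} {wH d : V → V → ℝ≥0∞} {c : ℝ≥0∞}
    {z : ℕ → V} (hz : ∀ a b e, a ≤ b → b ≤ e → d (z a) (z b) + d (z b) (z e) = d (z a) (z e))
    {a b : ℕ} (hab : a ≤ b)
    (hgood : ∀ l, a ≤ l → l < b → gdist H wH (z l) (z (l + 1)) ≤ c * d (z l) (z (l + 1))) :
    gdist H wH (z a) (z b) ≤ c * d (z a) (z b) := by
  induction b, hab using Nat.le_induction with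
  | base => simp
  | succ b hab ih =>
    calc gdist H wH (z a) (z (b + 1))
        ≤ gdist H wH (z a) (z b) + gdist H wH (z b) (z (b + 1)) := gdist_triangle _ _ _
      _ ≤ c * d (z a) (z b) + c * d (z b) (z (b + 1)) :=
          add_le_add (ih fun l hl hlb => hgood l hl (by omega)) (hgood b hab (by omega))
      _ = c * d (z a) (z (b + 1)) := by rw [← mul_add, hz a b (b + 1) hab b.le_succ]

section Arithmetic

variable {Δ : ℝ}

lemma ofReal_div_sub_three (hΔ : 3 < Δ) :
    ENNReal.ofReal (Δ / (Δ - 3)) = 1 + 3 * ENNReal.ofReal (1 / (Δ - 3)) := by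
  have h3 : 0 < Δ - 3 := by linarith
  rw [← ENNReal.ofReal_ofNat 3, ← ENNReal.ofReal_mul (by norm_num), ← ENNReal.ofReal_one,
    ← ENNReal.ofReal_add zero_le_one (by positivity)]
  congr 1
  field_simp
  ring

lemma ofReal_one_add_four_mul_succ (hΔ : 3 < Δ) (i : ℕ) :
    ENNReal.ofReal (1 + 4 * ((i + 1 : ℕ) : ℝ) / (Δ - 3)) =
      ENNReal.ofReal (1 + 4 * i / (Δ - 3)) + 4 * ENNReal.ofReal (1 / (Δ - 3)) := by
  have h3 : 0 < Δ - 3 := by linarith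
  rw [← ENNReal.ofReal_ofNat 4, ← ENNReal.ofReal_mul (by norm_num),
    ← ENNReal.ofReal_add (by positivity) (by positivity)]
  congr 1
  push_cast
  field_simp
  ring

lemma one_le_ofReal_one_add_four_mul (hΔ : 3 < Δ) (i : ℕ) :
    1 ≤ ENNReal.ofReal (1 + 4 * i / (Δ - 3)) := by
  have h3 : 0 < Δ - 3 := by linarith
  rw [ENNReal.one_le_ofReal]
  have : 0 ≤ 4 * (i : ℝ) / (Δ - 3) := by positivity
  linarith

lemma ofReal_div_sub_three_mul_le (hΔ : 3 < Δ) {T D : ℝ≥0∞}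
    (h : ENNReal.ofReal (3 * Δ) * T ≤ D) :
    ENNReal.ofReal (Δ / (Δ - 3)) * (3 * T) ≤ ENNReal.ofReal (1 / (Δ - 3)) * D := by
  have h3 : 0 < Δ - 3 := by linarith
  have key : ENNReal.ofReal (Δ / (Δ - 3)) * 3 =
      ENNReal.ofReal (1 / (Δ - 3)) * ENNReal.ofReal (3 * Δ) := by
    rw [← ENNReal.ofReal_ofNat 3, ← ENNReal.ofReal_mul (by positivity),
      ← ENNReal.ofReal_mul (by positivity)]
    congr 1
    field_simp
  calc ENNReal.ofReal (Δ / (Δ - 3)) * (3 * T)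
      = ENNReal.ofReal (1 / (Δ - 3)) * (ENNReal.ofReal (3 * Δ) * T) := by
        rw [← mul_assoc, key, mul_assoc]
    _ ≤ ENNReal.ofReal (1 / (Δ - 3)) * D := by gcongr

end Arithmetic

structure IsHierarchy (A : ℕ → Set V) (k : ℕ) : Prop where
  zero : A 0 = Set.univ
  succ_subset : ∀ i, A (i + 1) ⊆ A i
  eq_empty : A k = ∅

noncomputable def level (A : ℕ → Set V) (k : ℕ) (u : V) : ℕ :=
  Nat.findGreatest (u ∈ A ·) k

namespace IsHierarchy

variable {A : ℕ → Set V} {k j : ℕ} {u : V}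

lemma lt_of_mem (hA : IsHierarchy A k) (hu : u ∈ A j) : j < k := by
  by_contra! h
  simpa [hA.eq_empty] using antitone_nat_of_succ_le hA.succ_subset h hu

lemma mem_level (hA : IsHierarchy A k) : u ∈ A (level A k u) :=
  Nat.findGreatest_spec (P := (u ∈ A ·)) (Nat.zero_le k) (by simp [hA.zero])

lemma le_level (hA : IsHierarchy A k) (hu : u ∈ A j) : j ≤ level A k u :=
  Nat.le_findGreatest (hA.lt_of_mem hu).le hu

lemma level_lt (hA : IsHierarchy A k) : level A k u < k :=
  hA.lt_of_mem hA.mem_level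

lemma not_mem_level_succ (hA : IsHierarchy A k) : u ∉ A (level A k u + 1) :=
  fun h => (hA.le_level h).not_gt (Nat.lt_succ_self _)

lemma level_lt_of_not_mem (hA : IsHierarchy A k) (hu : u ∉ A j) : level A k u < j := by
  by_contra! h
  exact hu (antitone_nat_of_succ_le hA.succ_subset h hA.mem_level)

end IsHierarchy

def IsPivotMap (G : SimpleGraph V) (w : V → V → ℝ≥0∞) (A : ℕ → Set V) (k : ℕ)
    (pv : ℕ → V → V) : Prop :=
  ∀ i, i < k → ∀ v : V, (A i).Nonempty →
    pv i v ∈ A i ∧ ∀ a ∈ A i, gdist G w v (pv i v) ≤ gdist G w v a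

section Emulator

variable {G : SimpleGraph V} {w : V → V → ℝ≥0∞} {A : ℕ → Set V} {pv : ℕ → V → V} {k : ℕ}

local notation "δ" => gdist G w
local notation "δH" => gdist (emulGraph G w A pv k) (gdist G w)

lemma gdist_le_emulDist (u v : V) : δ u v ≤ δH u v := by
  refine le_iInf fun p => ?_
  induction p with
  | nil => simp
  | cons h q ih =>
    rw [wWeight_cons]
    exact (gdist_triangle _ _ _).trans (add_le_add le_rfl ih)

lemma emulDist_comm (hsym : ∀ u v, G.Adj u v → w u v = w v u) (u v : V) : δH u v = δH v u :=
  gdist_comm (fun _ _ _ => gdist_comm hsym _ _) u v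

lemma emulGraph_adj_pivot (hA : IsHierarchy A k) (hpv : IsPivotMap G w A k pv) {j : ℕ} {u : V}
    (hne : (A j).Nonempty) (hu : u ∉ A j) : (emulGraph G w A pv k).Adj u (pv j u) := by
  have hj := hA.lt_of_mem hne.some_mem
  exact ⟨fun h => hu (h ▸ (hpv j hj u hne).1), level A k u, Or.inl ⟨hA.mem_level,
    hA.not_mem_level_succ, Or.inr ⟨j, hA.level_lt_of_not_mem hu, hj, hne, rfl⟩⟩⟩

/-- Needed because, with zero-weight edges, the pivot `pv j u` of a vertex `u ∈ A j` need not
be `u` itself. -/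
lemma emulDist_eq_zero (hsym : ∀ u v, G.Adj u v → w u v = w v u) (hA : IsHierarchy A k)
    (hpv : IsPivotMap G w A k pv) {u v : V} (h : δ u v = 0) : δH u v = 0 := by
  suffices ∀ n u v, (k - level A k u) + (k - level A k v) = n → δ u v = 0 → δH u v = 0 from
    this _ u v rfl h
  intro n
  induction n using Nat.strong_induction_on with
  | _ n ih =>
  intro u v hn h
  wlog hle : level A k u ≤ level A k v generalizing u v
  · rw [emulDist_comm hsym]
    exact this v u (by omega) (by rwa [gdist_comm hsym]) (by omega)
  by_cases hnear : ∃ a ∈ A (level A k u + 1), δ u a = 0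
  · obtain ⟨a, ha, hua⟩ := hnear
    have hne : (A (level A k u + 1)).Nonempty := ⟨a, ha⟩
    have hpu := hpv _ (hA.lt_of_mem ha) u hne
    set p := pv (level A k u + 1) u
    have hup : δ u p = 0 := nonpos_iff_eq_zero.1 ((hpu.2 a ha).trans hua.le)
    have hp_zero : δ p v = 0 := by
      refine nonpos_iff_eq_zero.1 ((gdist_triangle p u v).trans ?_)
      rw [gdist_comm hsym, hup, h, add_zero]
    have hup_level := hA.le_level hpu.1
    have hp_lt := hA.level_lt (u := p)
    refine nonpos_iff_eq_zero.1 ((gdist_triangle u p v).trans ?_)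
    rw [ih _ (by omega) p v rfl hp_zero, add_zero, ← hup]
    exact gdist_le_of_adj (emulGraph_adj_pivot hA hpv hne hA.not_mem_level_succ)
  · push Not at hnear
    rcases eq_or_ne u v with rfl | huv
    · exact gdist_self u
    refine nonpos_iff_eq_zero.1 ((gdist_le_of_adj ?_).trans h.le)
    exact ⟨huv, level A k u, Or.inl ⟨hA.mem_level, hA.not_mem_level_succ,
      Or.inl ⟨antitone_nat_of_succ_le hA.succ_subset hle hA.mem_level,
        fun a ha => h ▸ pos_iff_ne_zero.2 (hnear a ha)⟩⟩⟩

lemma emulDist_pivot_le (hsym : ∀ u v, G.Adj u v → w u v = w v u) (hA : IsHierarchy A k)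
    (hpv : IsPivotMap G w A k pv) {j : ℕ} (hne : (A j).Nonempty) (u : V) :
    δH u (pv j u) ≤ δ u (pv j u) := by
  by_cases hu : u ∈ A j
  · have h0 : δ u (pv j u) = 0 := nonpos_iff_eq_zero.1
      (((hpv j (hA.lt_of_mem hu) u hne).2 u hu).trans_eq (gdist_self u))
    rw [emulDist_eq_zero hsym hA hpv h0, h0]
  · exact gdist_le_of_adj (emulGraph_adj_pivot hA hpv hne hu)

lemma or_emulDist_pivot_le_of_far (hsym : ∀ u v, G.Adj u v → w u v = w v u)
    (hA : IsHierarchy A k) (hpv : IsPivotMap G w A k pv) {P : Prop} {R : ℝ≥0∞} (j : ℕ) (x : V)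
    (hP : (∀ a ∈ A j, R < δ x a) → P) :
    P ∨ ((A j).Nonempty ∧ δH x (pv j x) ≤ R) := by
  by_cases hnear : ∃ a ∈ A j, δ x a ≤ R
  · obtain ⟨a, ha, hxa⟩ := hnear
    have hne : (A j).Nonempty := ⟨a, ha⟩
    exact Or.inr ⟨hne, (emulDist_pivot_le hsym hA hpv hne x).trans
      (((hpv j (hA.lt_of_mem ha) x hne).2 a ha).trans hxa)⟩
  · push Not at hnear
    exact Or.inl (hP hnear)

/-- `p` has level `j` and `p'` lies in its bunch. -/
lemma emulDist_le_of_far {j : ℕ} {x p p' : V} {R : ℝ≥0∞} (hp : p ∈ A j) (hp' : p' ∈ A j)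
    (hfar : ∀ a ∈ A (j + 1), R < δ x a) (hR : δ x p + δ p p' ≤ R) : δH p p' ≤ δ p p' := by
  rcases eq_or_ne p p' with rfl | hne
  · simp
  have hbunch : ∀ a ∈ A (j + 1), δ p p' < δ p a := fun a ha => by
    by_contra! h
    exact (hfar a ha).not_ge ((gdist_triangle x p a).trans ((add_le_add le_rfl h).trans hR))
  have hpj : p ∉ A (j + 1) := fun h => (hfar p h).not_ge (le_self_add.trans hR)
  exact gdist_le_of_adj ⟨hne, j, Or.inl ⟨hp, hpj, Or.inl ⟨hp', hbunch⟩⟩⟩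

lemma emulDist_le_of_near (hsym : ∀ u v, G.Adj u v → w u v = w v u) {j : ℕ} {x u u' a a' : V}
    {r R : ℝ≥0∞} (ha : a ∈ A j) (ha' : a' ∈ A j) (hua : δH u a ≤ r) (hua' : δH u' a' ≤ r)
    (hfar : ∀ b ∈ A (j + 1), R < δ x b) (hR : δ x u + δ u u' + 3 * r ≤ R) :
    δH u u' ≤ δ u u' + 4 * r := by
  have hua_G : δ u a ≤ r := (gdist_le_emulDist u a).trans hua
  have hua'_G : δ u' a' ≤ r := (gdist_le_emulDist u' a').trans hua'
  have haa' : δ a a' ≤ r + δ u u' + r :=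
    calc δ a a' ≤ δ u a + (δ u u' + δ u' a') := by
          rw [gdist_comm hsym u a]
          exact (gdist_triangle a u a').trans (add_le_add le_rfl (gdist_triangle u u' a'))
      _ ≤ r + (δ u u' + r) := by gcongr
      _ = r + δ u u' + r := by ring
  have hxa : δ x a ≤ δ x u + r := (gdist_triangle x u a).trans (add_le_add le_rfl hua_G)
  have hR' : δ x a + δ a a' ≤ R :=
    calc δ x a + δ a a' ≤ δ x u + r + (r + δ u u' + r) := add_le_add hxa haa'
      _ = δ x u + δ u u' + 3 * r := by ring
      _ ≤ R := hR
  calc δH u u' ≤ δH u a + (δH a a' + δH a' u') :=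
        (gdist_triangle u a u').trans (add_le_add le_rfl (gdist_triangle a a' u'))
    _ ≤ r + ((r + δ u u' + r) + r) := by
        rw [emulDist_comm hsym a' u']
        gcongr
        exact (emulDist_le_of_far ha ha' hfar hR').trans haa'
    _ = δ u u' + 4 * r := by ring

/-- Only the first and the last bad piece matter: everything between them is bypassed by one
detour through `A j`. -/
lemma emulDist_le_of_pieces (hsym : ∀ u v, G.Adj u v → w u v = w v u) {j m : ℕ} {z : ℕ → V}
    {c r R : ℝ≥0∞} (hc : 1 ≤ c)
    (hz : ∀ a b e, a ≤ b → b ≤ e → δ (z a) (z b) + δ (z b) (z e) = δ (z a) (z e))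
    (hfar : ∀ b ∈ A (j + 1), R < δ (z 0) b) (hR : δ (z 0) (z m) + 3 * r ≤ R)
    (hpieces : ∀ l < m, δH (z l) (z (l + 1)) ≤ c * δ (z l) (z (l + 1)) ∨
      ((∃ a ∈ A j, δH (z l) a ≤ r) ∧ ∃ a ∈ A j, δH (z (l + 1)) a ≤ r)) :
    δH (z 0) (z m) ≤ c * δ (z 0) (z m) + 4 * r := by
  by_cases hgood : ∀ l < m, δH (z l) (z (l + 1)) ≤ c * δ (z l) (z (l + 1))
  · exact (gdist_le_mul_of_chain hz (Nat.zero_le m) fun l _ hl => hgood l hl).trans le_self_add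
  obtain ⟨s, e, hse, hem, hs, he, hbefore, hafter⟩ := exists_first_last_of_not_forall hgood
  obtain ⟨a, ha, hza⟩ := ((hpieces s (hse.trans_lt hem)).resolve_left hs).1
  obtain ⟨a', ha', hza'⟩ := ((hpieces e hem).resolve_left he).2
  have hsum : δ (z 0) (z s) + δ (z s) (z (e + 1)) + δ (z (e + 1)) (z m) = δ (z 0) (z m) := by
    rw [hz 0 s (e + 1) (Nat.zero_le s) (by omega), hz 0 (e + 1) m (Nat.zero_le _) hem]
  have hmid := emulDist_le_of_near hsym ha ha' hza hza' hfar
    ((add_le_add (hsum ▸ le_self_add) le_rfl).trans hR)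
  calc δH (z 0) (z m) ≤ δH (z 0) (z s) + δH (z s) (z (e + 1)) + δH (z (e + 1)) (z m) :=
        (gdist_triangle _ _ _).trans (add_le_add (gdist_triangle _ _ _) le_rfl)
    _ ≤ c * δ (z 0) (z s) + (δ (z s) (z (e + 1)) + 4 * r) + c * δ (z (e + 1)) (z m) := by
        gcongr
        · exact gdist_le_mul_of_chain hz (Nat.zero_le s) fun l _ hl => hbefore l hl
        · exact gdist_le_mul_of_chain hz hem fun l hl hlm => hafter l hl hlm
    _ ≤ c * δ (z 0) (z s) + (c * δ (z s) (z (e + 1)) + 4 * r) + c * δ (z (e + 1)) (z m) := by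
        gcongr
        exact le_mul_of_one_le_left zero_le hc
    _ = c * δ (z 0) (z m) + 4 * r := by rw [← hsum]; ring

lemma good_or_near_of_dichotomy (hsym : ∀ u v, G.Adj u v → w u v = w v u)
    (hA : IsHierarchy A k) (hpv : IsPivotMap G w A k pv) {j : ℕ} {u v : V} {c β r : ℝ≥0∞}
    (huv : δH u v ≤ c * δ u v ∨ ((A j).Nonempty ∧ δH u (pv j u) ≤ β * δ u v))
    (hvu : δH v u ≤ c * δ v u ∨ ((A j).Nonempty ∧ δH v (pv j v) ≤ β * δ v u))
    (hr : β * δ u v ≤ r) :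
    δH u v ≤ c * δ u v ∨ ((∃ a ∈ A j, δH u a ≤ r) ∧ ∃ a ∈ A j, δH v a ≤ r) := by
  rw [emulDist_comm hsym v u, gdist_comm hsym v u] at hvu
  rcases huv with h | ⟨hne, hu⟩
  · exact Or.inl h
  rcases hvu with h | ⟨-, hv⟩
  · exact Or.inl h
  have hmem := fun x => (hpv j (hA.lt_of_mem hne.some_mem) x hne).1
  exact Or.inr ⟨⟨_, hmem u, hu.trans hr⟩, ⟨_, hmem v, hv.trans hr⟩⟩

lemma emulDist_le_of_far_succ (hsym : ∀ u v, G.Adj u v → w u v = w v u) (hA : IsHierarchy A k)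
    (hpv : IsPivotMap G w A k pv) (hΔ : 3 < Δ) (i : ℕ)
    (ih : ∀ {u v : V} (r : G.Walk u v), IsShortest w r →
      ENNReal.ofReal ((3 * Δ) ^ i) * maxW w r ≤ δ u v →
      δH u v ≤ ENNReal.ofReal (1 + 4 * i / (Δ - 3)) * δ u v ∨
        ((A (i + 1)).Nonempty ∧ δH u (pv (i + 1) u) ≤ ENNReal.ofReal (Δ / (Δ - 3)) * δ u v))
    {x y : V} (q : G.Walk x y) (hq : IsShortest w q)
    (hlong : ENNReal.ofReal ((3 * Δ) ^ (i + 1)) * maxW w q ≤ δ x y)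
    (hfar : ∀ a ∈ A (i + 1 + 1), ENNReal.ofReal (Δ / (Δ - 3)) * δ x y < δ x a) :
    δH x y ≤ ENNReal.ofReal (1 + 4 * ((i + 1 : ℕ) : ℝ) / (Δ - 3)) * δ x y := by
  by_cases hD : δ x y = ⊤
  · rw [hD, ENNReal.mul_top (zero_lt_one.trans_le (one_le_ofReal_one_add_four_mul hΔ _)).ne']
    exact le_top
  have hfin : wWeight w q ≠ ⊤ := hq ▸ hD
  set ε := ENNReal.ofReal (1 / (Δ - 3)) with hε
  set T := ENNReal.ofReal ((3 * Δ) ^ i) * maxW w q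
  have hT : ENNReal.ofReal (3 * Δ) * T ≤ δ x y := by
    rwa [← mul_assoc, ← ENNReal.ofReal_mul (by linarith), ← pow_succ']
  have hTD : T ≤ δ x y :=
    (le_mul_of_one_le_left zero_le (ENNReal.one_le_ofReal.2 (by linarith))).trans hT
  have hWT : maxW w q ≤ T :=
    le_mul_of_one_le_left zero_le (ENNReal.one_le_ofReal.2 (one_le_pow₀ (by linarith)))
  obtain ⟨m, f, hf, hx, hy, hseg⟩ :=
    hq.exists_pieces hfin (ne_top_of_le_ne_top hD hTD) hWT hTD
  have hpieces : ∀ l < m,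
      δH (q.getVert (f l)) (q.getVert (f (l + 1))) ≤
        ENNReal.ofReal (1 + 4 * i / (Δ - 3)) * δ (q.getVert (f l)) (q.getVert (f (l + 1))) ∨
      ((∃ a ∈ A (i + 1), δH (q.getVert (f l)) a ≤ ε * δ x y) ∧
        ∃ a ∈ A (i + 1), δH (q.getVert (f (l + 1))) a ≤ ε * δ x y) := by
    intro l hl
    obtain ⟨r, hr, hsub, -⟩ := hq.exists_sub hfin (hf l.le_succ)
    have hrlong : ENNReal.ofReal ((3 * Δ) ^ i) * maxW w r ≤
        δ (q.getVert (f l)) (q.getVert (f (l + 1))) :=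
      (mul_le_mul_of_nonneg_left (maxW_le_of_darts_sublist hsub) zero_le).trans (hseg l hl).1
    refine good_or_near_of_dichotomy hsym hA hpv (ih r hr hrlong)
      (ih r.reverse (hr.reverse hsym) ?_) ?_
    · rw [gdist_comm hsym]
      exact (mul_le_mul_of_nonneg_left (maxW_reverse_le hsym r) zero_le).trans hrlong
    · exact (mul_le_mul_of_nonneg_left (hseg l hl).2 zero_le).trans
        (ofReal_div_sub_three_mul_le hΔ hT)
  have hR : δ x y + 3 * (ε * δ x y) ≤ ENNReal.ofReal (Δ / (Δ - 3)) * δ x y :=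
    le_of_eq (by rw [ofReal_div_sub_three hΔ, ← hε]; ring)
  have key := emulDist_le_of_pieces (z := fun l => q.getVert (f l)) hsym
    (one_le_ofReal_one_add_four_mul hΔ i)
    (fun _ _ _ hab hbe => hq.gdist_getVert_add hfin (hf hab) (hf hbe))
    (by rwa [hx]) (by rwa [hx, hy]) hpieces
  simp only [hx, hy] at key
  exact key.trans_eq (by rw [ofReal_one_add_four_mul_succ hΔ, ← hε]; ring)

theorem emulDist_dichotomy (hsym : ∀ u v, G.Adj u v → w u v = w v u) (hA : IsHierarchy A k)
    (hpv : IsPivotMap G w A k pv) (hΔ : 3 < Δ) (i : ℕ) :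
    ∀ {x y : V} (q : G.Walk x y), IsShortest w q →
      ENNReal.ofReal ((3 * Δ) ^ i) * maxW w q ≤ δ x y →
      δH x y ≤ ENNReal.ofReal (1 + 4 * i / (Δ - 3)) * δ x y ∨
        ((A (i + 1)).Nonempty ∧ δH x (pv (i + 1) x) ≤ ENNReal.ofReal (Δ / (Δ - 3)) * δ x y) := by
  induction i with
  | zero =>
    intro x y _ _ _
    refine or_emulDist_pivot_le_of_far hsym hA hpv _ x fun hfar => ?_
    have hβ : 1 ≤ ENNReal.ofReal (Δ / (Δ - 3)) := by
      rw [ofReal_div_sub_three hΔ]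
      exact le_self_add
    calc δH x y ≤ δ x y := emulDist_le_of_far (by simp [hA.zero]) (by simp [hA.zero]) hfar
          (by simpa using le_mul_of_one_le_left zero_le hβ)
      _ = ENNReal.ofReal (1 + 4 * ((0 : ℕ) : ℝ) / (Δ - 3)) * δ x y := by simp
  | succ i ih =>
    intro x y q hq hlong
    exact or_emulDist_pivot_le_of_far hsym hA hpv _ x
      (emulDist_le_of_far_succ hsym hA hpv hΔ i ih q hq hlong)

end Emulator

theorem statement0_general (G : SimpleGraph V)
    (w : V → V → ℝ≥0∞) (hwsym : ∀ u v, G.Adj u v → w u v = w v u)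
    (k : ℕ) (A : ℕ → Set V) (hA0 : A 0 = Set.univ)
    (hAnest : ∀ i, A (i + 1) ⊆ A i) (hAk : A k = ∅)
    (pv : ℕ → V → V)
    (hpv : ∀ i, i < k → ∀ v : V, (A i).Nonempty →
      pv i v ∈ A i ∧ ∀ a ∈ A i, gdist G w v (pv i v) ≤ gdist G w v a)
    (Δ : ℝ) (hΔ : 3 < Δ) (i : ℕ) (x y : V) (Wxy : ℝ≥0∞)
    (hW : ∃ q : G.Walk x y, q.IsPath ∧ wWeight w q = gdist G w x y ∧ maxW w q = Wxy)
    (hfar : ENNReal.ofReal ((3 * Δ) ^ i) * Wxy ≤ gdist G w x y) :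
    gdist (emulGraph G w A pv k) (gdist G w) x y ≤
        ENNReal.ofReal (1 + 4 * i / (Δ - 3)) * gdist G w x y ∨
      ((A (i + 1)).Nonempty ∧
        gdist (emulGraph G w A pv k) (gdist G w) x (pv (i + 1) x) ≤
          ENNReal.ofReal (Δ / (Δ - 3)) * gdist G w x y) := by
  obtain ⟨q, -, hq, rfl⟩ := hW
  exact emulDist_dichotomy hwsym ⟨hA0, hAnest, hAk⟩ hpv hΔ i q hq hfar

/-- Lemma 3.1: for `x, y` with `d_G(x,y) ≥ (3Δ)^i · W(x,y)`, either
`d_H(x,y) ≤ (1 + 4i/(Δ-3)) d_G(x,y)`, or `A_{i+1} ≠ ∅` and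
`d_H(x, p_{i+1}(x)) ≤ (Δ/(Δ-3)) d_G(x,y)`. -/
theorem statement0 [Fintype V] (G : SimpleGraph V) (hconn : G.Connected)
    (w : V → V → ℝ≥0∞) (hwsym : ∀ u v, G.Adj u v → w u v = w v u)
    (hwfin : ∀ u v, G.Adj u v → w u v ≠ ⊤)
    (k : ℕ) (hk : 1 ≤ k) (A : ℕ → Set V) (hA0 : A 0 = Set.univ)
    (hAnest : ∀ i, A (i + 1) ⊆ A i) (hAk : A k = ∅)
    (pv : ℕ → V → V)
    (hpv : ∀ i, i < k → ∀ v : V, (A i).Nonempty →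
      pv i v ∈ A i ∧ ∀ a ∈ A i, gdist G w v (pv i v) ≤ gdist G w v a)
    (Δ : ℝ) (hΔ : 3 < Δ) (i : ℕ) (hi : i < k) (x y : V) (Wxy : ℝ≥0∞)
    (hW : ∃ q : G.Walk x y, q.IsPath ∧ wWeight w q = gdist G w x y ∧ maxW w q = Wxy)
    (hfar : ENNReal.ofReal ((3 * Δ) ^ i) * Wxy ≤ gdist G w x y) :
    gdist (emulGraph G w A pv k) (gdist G w) x y ≤
        ENNReal.ofReal (1 + 4 * i / (Δ - 3)) * gdist G w x y ∨
      ((A (i + 1)).Nonempty ∧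
        gdist (emulGraph G w A pv k) (gdist G w) x (pv (i + 1) x) ≤
          ENNReal.ofReal (Δ / (Δ - 3)) * gdist G w x y) :=
  statement0_general G w hwsym k A hA0 hAnest hAk pv hpv Δ hΔ i x y Wxy hW hfar

end ASP
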